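/- arXiv:2502.15276 — 2 statements merged into one kernel-verified Lean document; each statement's English description precedes it below -/
import Mathlib

section
/- Categorical Lyapunov theorem (metric-space version): Let φ : T × E → E be a flow with equilibrium point x*. If there exists V : E → ℝ≥0 and class K functions α̲, ᾱ with α̲(d(x,x*)) ≤ V(x) ≤ ᾱ(d(x,x*)) for all x, and V(φ(t,x)) ≤ V(x) for all t, x, then x* is stable: d(φ(t,x), x*) ≤ (α̲⁻¹ ∘ ᾱ)(d(x,x*)) for all t, x. -/
open scoped NNReal

/-- A class K function on `ℝ≥0`: a strictly increasing bijection fixing `0`. -/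
def ClassK (α : ℝ≥0 → ℝ≥0) : Prop :=
  StrictMono α ∧ Function.Bijective α ∧ α 0 = 0

open Function

theorem StrictMono.le_invFun_iff {α β : Type*} [LinearOrder α] [Preorder β] [Nonempty α]
    {f : α → β} (hf : StrictMono f) (hsurj : Surjective f) {a : α} {b : β} :
    a ≤ invFun f b ↔ f a ≤ b := by
  rw [← hf.le_iff_le, rightInverse_invFun hsurj]

theorem nndist_le_invFun_of_lyapunov_le {E : Type*} [PseudoMetricSpace E] {xs : E}
    {V : E → ℝ≥0} {αl αu : ℝ≥0 → ℝ≥0} (hαl : StrictMono αl) (hαl_surj : Surjective αl)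
    (hlower : ∀ x, αl (nndist x xs) ≤ V x) (hupper : ∀ x, V x ≤ αu (nndist x xs))
    {x y : E} (hV : V y ≤ V x) :
    nndist y xs ≤ invFun αl (αu (nndist x xs)) :=
  (hαl.le_invFun_iff hαl_surj).2 <| calc
    αl (nndist y xs) ≤ V y := hlower y
    _ ≤ V x := hV
    _ ≤ αu (nndist x xs) := hupper x

theorem lyapunov_stability_general {T : Type*}
    {E : Type*} [MetricSpace E]
    (φ : T → E → E)
    (xs : E)
    (V : E → ℝ≥0) (αl αu : ℝ≥0 → ℝ≥0)
    (hαl : ClassK αl)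
    (hbound : ∀ x, αl (nndist x xs) ≤ V x ∧ V x ≤ αu (nndist x xs))
    (hdecr : ∀ t x, V (φ t x) ≤ V x) :
    ∀ t x, nndist (φ t x) xs ≤ Function.invFun αl (αu (nndist x xs)) := fun t x =>
  nndist_le_invFun_of_lyapunov_le hαl.1 hαl.2.1.2 (fun x => (hbound x).1)
    (fun x => (hbound x).2) (hdecr t x)

/-- Categorical Lyapunov theorem, metric-space version. -/
theorem lyapunov_stability {T : Type*} [AddMonoid T]
    {E : Type*} [MetricSpace E]
    (φ : T → E → E)
    (hinit : ∀ x, φ 0 x = x)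
    (hcomp : ∀ t₁ t₂ x, φ t₁ (φ t₂ x) = φ (t₁ + t₂) x)
    (xs : E) (heq : ∀ t, φ t xs = xs)
    (V : E → ℝ≥0) (αl αu : ℝ≥0 → ℝ≥0)
    (hαl : ClassK αl) (hαu : ClassK αu)
    (hbound : ∀ x, αl (nndist x xs) ≤ V x ∧ V x ≤ αu (nndist x xs))
    (hdecr : ∀ t x, V (φ t x) ≤ V x) :
    ∀ t x, nndist (φ t x) xs ≤ Function.invFun αl (αu (nndist x xs)) :=
  lyapunov_stability_general φ xs V αl αu hαl hbound hdecr
end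

section
/- Converse Lyapunov theorem (metric-space version): Let φ : T × E → E be a flow with a stable equilibrium point x*, i.e. there is a class K function α with d(φ(t,x), x*) ≤ α(d(x,x*)) for all t, x. Then V(x) := sup_{t ∈ T} d(φ(t,x), x*) is well-defined (finite), positive definite with respect to x* (bounded below by the identity class K function applied to d(x,x*) and above by α), and decrescent: V(φ(t,x)) ≤ V(x) for all t, x. -/
open scoped NNReal

theorem ciSup_comp_le_of_bddAbove {α ι ι' : Type*} [ConditionallyCompleteLinearOrderBot α]
    {f : ι → α} (hf : BddAbove (Set.range f)) (g : ι' → ι) :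
    ⨆ i, f (g i) ≤ ⨆ i, f i :=
  ciSup_le' fun i => le_ciSup hf (g i)

theorem converse_lyapunov_general {T : Type*} [AddMonoid T]
    {E : Type*} [MetricSpace E]
    (φ : T → E → E)
    (hinit : ∀ x, φ 0 x = x)
    (hcomp : ∀ t₁ t₂ x, φ t₁ (φ t₂ x) = φ (t₁ + t₂) x)
    (xs : E)
    (α : ℝ≥0 → ℝ≥0)
    (hstab : ∀ t x, nndist (φ t x) xs ≤ α (nndist x xs)) :
    (∀ x, BddAbove (Set.range fun t => nndist (φ t x) xs)) ∧
    (∀ x, nndist x xs ≤ (⨆ t, nndist (φ t x) xs) ∧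
      (⨆ t, nndist (φ t x) xs) ≤ α (nndist x xs)) ∧
    (∀ t x, (⨆ s, nndist (φ s (φ t x)) xs) ≤ ⨆ s, nndist (φ s x) xs) := by
  have hbdd : ∀ x, BddAbove (Set.range fun t => nndist (φ t x) xs) := fun x =>
    ⟨α (nndist x xs), Set.forall_mem_range.2 (hstab · x)⟩
  refine ⟨hbdd, fun x => ⟨?_, ciSup_le' (hstab · x)⟩, fun t x => ?_⟩
  · simpa only [hinit] using le_ciSup (hbdd x) 0
  · simpa only [hcomp] using ciSup_comp_le_of_bddAbove (hbdd x) (· + t)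

/-- Converse Lyapunov theorem, metric-space version.
`V x := ⨆ t, nndist (φ t x) xs` is well-defined (the orbit distances are
bounded above), positive definite (bounded below by `nndist x xs` and
above by `α (nndist x xs)`), and decrescent along the flow. -/
theorem converse_lyapunov {T : Type*} [AddMonoid T]
    {E : Type*} [MetricSpace E]
    (φ : T → E → E)
    (hinit : ∀ x, φ 0 x = x)
    (hcomp : ∀ t₁ t₂ x, φ t₁ (φ t₂ x) = φ (t₁ + t₂) x)
    (xs : E) (heq : ∀ t, φ t xs = xs)
    (α : ℝ≥0 → ℝ≥0) (hα : ClassK α)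
    (hstab : ∀ t x, nndist (φ t x) xs ≤ α (nndist x xs)) :
    (∀ x, BddAbove (Set.range fun t => nndist (φ t x) xs)) ∧
    (∀ x, nndist x xs ≤ (⨆ t, nndist (φ t x) xs) ∧
      (⨆ t, nndist (φ t x) xs) ≤ α (nndist x xs)) ∧
    (∀ t x, (⨆ s, nndist (φ s (φ t x)) xs) ≤ ⨆ s, nndist (φ s x) xs) :=
  converse_lyapunov_general φ hinit hcomp xs α hstab
end
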